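/- arXiv:math/0412456 — 2 statements merged into one kernel-verified Lean document; each statement's English description precedes it below -/
import Mathlib

section
/- There is a bijection between n-cell e-diagrams D and triples (D_beta, lambda, mu), where beta = beta(D) is the classifying signed permutation of D, and lambda, mu are partitions with all parts at most n; moreover under this bijection the weight satisfies |D| = |D_beta| + 2(|lambda|, |mu|), where |D| = (sum of first coordinates, sum of second coordinates). -/
open scoped Classical

/-- The hyperoctahedral group `B_n`, modeled as pairs (permutation, sign vector),
i.e. the wreath product `ℤ₂ ≀ S_n`.  `β.2 i = true` means the entry at position `i`
is negative. -/
abbrev HO (n : ℕ) := Equiv.Perm (Fin n) × (Fin n → Bool)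

namespace HO

/-- The inverse signed permutation. -/
noncomputable def inv {n : ℕ} (β : HO n) : HO n := (β.1⁻¹, fun i => β.2 (β.1⁻¹ i))

/-- One-line notation (1-indexed): the signed value `β(i) ∈ {±1,…,±n}` for `1 ≤ i ≤ n`,
and `0` outside this range. -/
noncomputable def val {n : ℕ} (β : HO n) (i : ℕ) : ℤ :=
  if h : 1 ≤ i ∧ i ≤ n then
    (if β.2 ⟨i - 1, by omega⟩ then -(((β.1 ⟨i - 1, by omega⟩ : Fin n) : ℕ) + 1 : ℤ)
     else (((β.1 ⟨i - 1, by omega⟩ : Fin n) : ℕ) + 1 : ℤ))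
  else 0

/-- The order `-1 ≺ -2 ≺ ⋯ ≺ -n ≺ ⋯ ≺ 0 ≺ 1 ≺ 2 ≺ ⋯` on `ℤ`:
`bprec a b` means `a ≺ b`. -/
noncomputable def bprec (a b : ℤ) : Prop :=
  (a < 0 ∧ b < 0 ∧ -a < -b) ∨ (a < 0 ∧ 0 ≤ b) ∨ (0 ≤ a ∧ 0 ≤ b ∧ a < b)

/-- Descent set of `β` with respect to the order `≺`. -/
noncomputable def Des {n : ℕ} (β : HO n) : Finset ℕ :=
  (Finset.Icc 1 (n - 1)).filter fun i => bprec (val β (i + 1)) (val β i)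

/-- Rise set of `β` with respect to the order `≺`. -/
noncomputable def Ris {n : ℕ} (β : HO n) : Finset ℕ :=
  (Finset.Icc 1 (n - 1)).filter fun i => bprec (val β i) (val β (i + 1))

/-- Major index. -/
noncomputable def maj {n : ℕ} (β : HO n) : ℕ := ∑ i ∈ Des β, i

/-- Number of negative entries. -/
noncomputable def neg {n : ℕ} (β : HO n) : ℕ :=
  ((Finset.Icc 1 n).filter fun i => val β i < 0).card

/-- The flag-major index `fmaj β = 2 maj β + neg β`. -/
noncomputable def fmaj {n : ℕ} (β : HO n) : ℕ := 2 * maj β + neg β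

/-- `δ_i(β) = #{j ∈ Des(β) : j < i}`. -/
noncomputable def deltaStat {n : ℕ} (β : HO n) (i : ℕ) : ℕ := ((Des β).filter fun j => j < i).card

/-- `d_i(β) = #{j ∈ Des(β) : j ≥ i}`. -/
noncomputable def dStat {n : ℕ} (β : HO n) (i : ℕ) : ℕ := ((Des β).filter fun j => i ≤ j).card

/-- `ε_i(β) = 1` if `β(i) < 0`, else `0`. -/
noncomputable def epsStat {n : ℕ} (β : HO n) (i : ℕ) : ℕ := if val β i < 0 then 1 else 0

/-- `η_i(β) = 1` if `β(i) > 0`, else `0`. -/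
noncomputable def etaStat {n : ℕ} (β : HO n) (i : ℕ) : ℕ := if 0 < val β i then 1 else 0

/-- `g_i(β) = 2 δ_i(β) + η_i(β)`. -/
noncomputable def gstat {n : ℕ} (β : HO n) (i : ℕ) : ℕ := 2 * deltaStat β i + etaStat β i

/-- `f_i(β) = 2 d_i(β) + ε_i(β)` (so that `fmaj β = ∑ f_i(β)`). -/
noncomputable def fStat {n : ℕ} (β : HO n) (i : ℕ) : ℕ := 2 * dStat β i + epsStat β i

/-- `μ_i(β) = #{k ∈ Ris(β⁻¹) : k < i}`. -/
noncomputable def muStat {n : ℕ} (β : HO n) (i : ℕ) : ℕ := ((Ris (inv β)).filter fun k => k < i).card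

/-- `ĝ_i(β) = 2 μ_{σ(i)}(β) + ε_i(β)`, where `σ(i) = |β(i)|`. -/
noncomputable def ghat {n : ℕ} (β : HO n) (i : ℕ) : ℕ :=
  2 * muStat β (val β i).natAbs + epsStat β i

end HO

/-- The key used for the labelling (opposite-lexicographic) order on the cells of a
diagram `D : Fin n → ℕ × ℕ`: compare `b`, then `a`, then the index (to break ties). -/
noncomputable def okey {n : ℕ} (D : Fin n → ℕ × ℕ) (i : Fin n) : ℕ ×ₗ (ℕ ×ₗ ℕ) :=
  toLex ((D i).2, toLex ((D i).1, (i : ℕ)))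

/-- The label of the `i`-th cell of `D` (cells listed in reading = lex order):
its rank in the opposite-lexicographic labelling order. -/
noncomputable def labelOf {n : ℕ} (D : Fin n → ℕ × ℕ) (i : Fin n) : ℕ :=
  (Finset.univ.filter fun j : Fin n => okey D j ≤ okey D i).card

/-- The value at `i` of the classifying signed permutation `β(D)` of a diagram `D`
whose cells are listed in lex (reading) order: `β(D)(i) = (-1)^{a_i + 1} · label(i)`. -/
noncomputable def classifyVal {n : ℕ} (D : Fin n → ℕ × ℕ) (i : Fin n) : ℤ :=
  (if (D i).1 % 2 = 1 then 1 else -1) * (labelOf D i : ℤ)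

/-- The compact `e`-diagram `D_β = (g(β), g̃(β))`, with cells listed in reading order:
the `i`-th cell is `(g_i(β), g_{σ(i)}(β⁻¹))` where `σ(i) = |β(i)|`. -/
noncomputable def Dbeta {n : ℕ} (β : HO n) (i : Fin n) : ℕ × ℕ :=
  (HO.gstat β ((i : ℕ) + 1), HO.gstat (HO.inv β) (HO.val β ((i : ℕ) + 1)).natAbs)


/-- An `n`-cell `e`-diagram: a multiset of `n` cells `(a,b)` with `a + b` even,
listed in weakly increasing lexicographic (reading) order. -/
noncomputable def EDiag (n : ℕ) : Type :=
  {D : Fin n → ℕ × ℕ // (Monotone fun i => toLex (D i)) ∧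
    ∀ i, ((D i).1 + (D i).2) % 2 = 0}

/-- Partitions with all parts at most `n` (modeled as multisets of parts). -/
noncomputable def PartLE (n : ℕ) : Type :=
  {s : Multiset ℕ // ∀ x ∈ s, 1 ≤ x ∧ x ≤ n}

/-!
Write `x` for the first coordinates of a diagram `D` in reading order and `y` for its second
coordinates in label order. With `β = β(D)`, the sequence `x` has the parities of the signs of `β`,
weakly increases, and can only stay constant where `|β|` increases; `y` behaves in the same way
with respect to `β⁻¹`. Conversely any such pair `(x, y)` reassembles to a diagram whose classifying
permutation is `β`. The sequence `g(β)` is the least sequence with these properties: between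
consecutive positions it grows exactly by the change of parity plus `2` at a descent, and
a descent of `β` forces a sequence of the above kind to grow by that much. Hence the admissible `x`
are exactly `g(β) + 2m` with `m` weakly increasing, and weakly increasing `m : Fin n → ℕ` are
the conjugates of partitions with parts at most `n`, with the same sum.
-/

theorem Fin.monotone_of_forall_val_eq_succ {n : ℕ} {α : Type*} [Preorder α] {f : Fin n → α}
    (h : ∀ i j : Fin n, (j : ℕ) = i + 1 → f i ≤ f j) : Monotone f := by
  cases n with
  | zero => exact fun i => i.elim0
  | succ n => exact Fin.monotone_iff_le_succ.2 fun i => h _ _ (by simp)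

theorem Fin.strictMono_of_forall_val_eq_succ {n : ℕ} {α : Type*} [Preorder α] {f : Fin n → α}
    (h : ∀ i j : Fin n, (j : ℕ) = i + 1 → f i < f j) : StrictMono f := by
  cases n with
  | zero => exact fun i => i.elim0
  | succ n => exact Fin.strictMono_iff_lt_succ.2 fun i => h _ _ (by simp)

namespace HO

variable {n : ℕ}

theorem val_succ (β : HO n) (i : Fin n) :
    val β (i + 1) = if β.2 i then -((β.1 i : ℤ) + 1) else (β.1 i : ℤ) + 1 := by
  simp [val]

theorem natAbs_val_succ (β : HO n) (i : Fin n) : (val β (i + 1)).natAbs = β.1 i + 1 := by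
  rw [val_succ]; split <;> omega

theorem etaStat_succ (β : HO n) (i : Fin n) : etaStat β (i + 1) = if β.2 i then 0 else 1 := by
  rw [etaStat, val_succ]; split_ifs <;> omega

theorem etaStat_le_one (β : HO n) (p : ℕ) : etaStat β p ≤ 1 := by
  unfold etaStat; split <;> omega

@[simp] theorem inv_snd_apply (β : HO n) (k : Fin n) : (inv β).2 k = β.2 (β.1⁻¹ k) := rfl

theorem etaStat_inv_succ (β : HO n) (i : Fin n) :
    etaStat (inv β) (β.1 i + 1) = etaStat β (i + 1) := by
  simp [etaStat_succ]

theorem succ_mem_Des_iff (β : HO n) {i j : Fin n} (hij : (j : ℕ) = i + 1) :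
    (i : ℕ) + 1 ∈ Des β ↔ etaStat β (j + 1) < etaStat β (i + 1) ∨
      etaStat β (i + 1) = etaStat β (j + 1) ∧ β.1 j < β.1 i := by
  have hj : (i : ℕ) + 1 + 1 = j + 1 := by omega
  have hn : (i : ℕ) + 1 ≤ n - 1 := by omega
  rw [Des, Finset.mem_filter, Finset.mem_Icc, hj, bprec, val_succ, val_succ, etaStat_succ,
    etaStat_succ, Fin.lt_def]
  cases β.2 i <;> cases β.2 j <;> simp only [Bool.false_eq_true, ↓reduceIte, true_and] <;> omega

theorem gstat_one (β : HO n) : gstat β 1 = etaStat β 1 := by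
  have : deltaStat β 1 = 0 := by
    simp only [deltaStat, Des, Finset.card_eq_zero, Finset.filter_eq_empty_iff,
      Finset.mem_filter, Finset.mem_Icc]
    omega
  simp [gstat, this]

theorem gstat_mod_two (β : HO n) (p : ℕ) : gstat β p % 2 = etaStat β p := by
  have := etaStat_le_one β p
  unfold gstat; omega

theorem deltaStat_succ (β : HO n) (p : ℕ) :
    deltaStat β (p + 1) = deltaStat β p + if p ∈ Des β then 1 else 0 := by
  simp only [deltaStat, Nat.lt_succ_iff_lt_or_eq, Finset.filter_or]
  rw [Finset.card_union_of_disjoint (Finset.disjoint_filter.2 fun _ _ h => h.ne),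
    Finset.filter_eq']
  split <;> simp

theorem gstat_succ_add_etaStat (β : HO n) (p : ℕ) :
    gstat β (p + 1) + etaStat β p =
      gstat β p + etaStat β (p + 1) + 2 * if p ∈ Des β then 1 else 0 := by
  rw [gstat, gstat, deltaStat_succ]
  ring

structure Compatible (β : HO n) (x : Fin n → ℕ) : Prop where
  mod_two : ∀ i, x i % 2 = etaStat β (i + 1)
  step : ∀ i j : Fin n, (j : ℕ) = i + 1 → x i ≤ x j ∧ (x i = x j → β.1 i < β.1 j)

variable {β : HO n} {x m : Fin n → ℕ}

theorem Compatible.monotone (hx : Compatible β x) : Monotone x :=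
  Fin.monotone_of_forall_val_eq_succ fun i j hij => (hx.step i j hij).1

theorem compatible_gstat (β : HO n) : Compatible β fun i => gstat β (i + 1) where
  mod_two i := gstat_mod_two β _
  step i j hij := by
    have h := gstat_succ_add_etaStat β (i + 1)
    rw [show (i : ℕ) + 1 + 1 = j + 1 by omega] at h
    have := etaStat_le_one β (i + 1)
    have := etaStat_le_one β (j + 1)
    have hne : β.1 i ≠ β.1 j := β.1.injective.ne (by omega)
    split_ifs at h with hd <;> rw [succ_mem_Des_iff β hij] at hd <;>
      exact ⟨by omega, fun _ => by omega⟩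

theorem Compatible.add_two_mul (hx : Compatible β x) (hm : Monotone m) :
    Compatible β fun i => x i + 2 * m i where
  mod_two i := by have := hx.mod_two i; omega
  step i j hij := by
    have := hx.step i j hij
    have := hm (Fin.le_def.2 (by omega) : i ≤ j)
    omega

theorem Compatible.gstat_add_le (hx : Compatible β x) {i j : Fin n} (hij : (j : ℕ) = i + 1) :
    gstat β (j + 1) + x i ≤ gstat β (i + 1) + x j := by
  have h := gstat_succ_add_etaStat β (i + 1)
  rw [show (i : ℕ) + 1 + 1 = j + 1 by omega] at h
  have := etaStat_le_one β (i + 1)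
  have := etaStat_le_one β (j + 1)
  have := hx.mod_two i
  have := hx.mod_two j
  have := hx.step i j hij
  split_ifs at h with hd <;> rw [succ_mem_Des_iff β hij] at hd <;> omega

theorem Compatible.gstat_le (hx : Compatible β x) (i : Fin n) : gstat β (i + 1) ≤ x i := by
  obtain ⟨k, rfl⟩ : ∃ k, n = k + 1 := ⟨n - 1, by have := i.isLt; omega⟩
  induction i using Fin.induction with
  | zero =>
    have := hx.mod_two 0
    simp only [Fin.val_zero, zero_add, ← gstat_one] at this ⊢
    omega
  | succ i ih =>
    have := hx.gstat_add_le (i := i.castSucc) (j := i.succ) (by simp)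
    simp only [Fin.val_castSucc, Fin.val_succ] at ih this ⊢
    omega

theorem Compatible.eq_gstat_add_two_mul (hx : Compatible β x) (i : Fin n) :
    x i = gstat β (i + 1) + 2 * ((x i - gstat β (i + 1)) / 2) := by
  have := hx.gstat_le i
  have := hx.mod_two i
  have := gstat_mod_two β (i + 1)
  omega

theorem Compatible.monotone_half_sub (hx : Compatible β x) :
    Monotone fun i => (x i - gstat β (i + 1)) / 2 :=
  Fin.monotone_of_forall_val_eq_succ fun i j hij => by
    have := hx.gstat_add_le hij
    have := hx.gstat_le i
    have := hx.gstat_le j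
    omega

noncomputable def compatibleEquiv (β : HO n) :
    {x // Compatible β x} ≃ {m : Fin n → ℕ // Monotone m} where
  toFun x := ⟨fun i => (x.1 i - gstat β (i + 1)) / 2, x.2.monotone_half_sub⟩
  invFun m := ⟨fun i => gstat β (i + 1) + 2 * m.1 i, (compatible_gstat β).add_two_mul m.2⟩
  left_inv x := Subtype.ext <| funext fun i => (x.2.eq_gstat_add_two_mul i).symm
  right_inv m := Subtype.ext <| funext fun i => by simp

end HO

section Labels

open Finset

variable {n : ℕ}

theorem Finset.card_filter_le_lt_card_filter_le_iff {ι α : Type*} [Fintype ι] [LinearOrder α]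
    (f : ι → α) (i j : ι) : #{k | f k ≤ f i} < #{k | f k ≤ f j} ↔ f i < f j := by
  constructor
  · intro h
    by_contra hle
    refine h.not_ge (card_le_card fun k hk => ?_)
    simp only [mem_filter, mem_univ, true_and] at hk ⊢
    exact hk.trans (not_lt.1 hle)
  · intro h
    refine card_lt_card ((ssubset_iff_of_subset fun k hk => ?_).2 ⟨j, ?_, ?_⟩)
    · simp only [mem_filter, mem_univ, true_and] at hk ⊢
      exact hk.trans h.le
    · simp
    · simpa using h

variable (D : Fin n → ℕ × ℕ)

theorem okey_injective : Function.Injective (okey D) := fun i j h => by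
  simp only [okey, toLex_inj, Prod.mk.injEq, Fin.val_inj] at h
  exact h.2.2

theorem labelOf_lt_labelOf_iff {i j : Fin n} : labelOf D i < labelOf D j ↔ okey D i < okey D j :=
  card_filter_le_lt_card_filter_le_iff (okey D) i j

theorem labelOf_injective : Function.Injective (labelOf D) := fun i j h => by
  by_contra hne
  rcases lt_or_gt_of_ne ((okey_injective D).ne hne) with hlt | hlt
  · exact ((labelOf_lt_labelOf_iff D).2 hlt).ne h
  · exact ((labelOf_lt_labelOf_iff D).2 hlt).ne h.symm

theorem one_le_labelOf (i : Fin n) : 1 ≤ labelOf D i :=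
  card_pos.2 ⟨i, by simp⟩

theorem labelOf_le (i : Fin n) : labelOf D i ≤ n :=
  (card_le_univ _).trans_eq (Fintype.card_fin n)

noncomputable def sigmaD : Equiv.Perm (Fin n) :=
  Equiv.ofBijective
    (fun i => ⟨labelOf D i - 1, by have := labelOf_le D i; have := one_le_labelOf D i; omega⟩)
    (Finite.injective_iff_bijective.1 fun i j h => labelOf_injective D <| by
      have := one_le_labelOf D i
      have := one_le_labelOf D j
      simp only [Fin.mk.injEq] at h
      omega)

theorem sigmaD_add_one (i : Fin n) : (sigmaD D i : ℕ) + 1 = labelOf D i := by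
  have := one_le_labelOf D i
  simp only [sigmaD, Equiv.ofBijective_apply]
  omega

theorem sigmaD_lt_sigmaD_iff {i j : Fin n} : sigmaD D i < sigmaD D j ↔ okey D i < okey D j := by
  rw [← labelOf_lt_labelOf_iff, ← sigmaD_add_one, ← sigmaD_add_one, Nat.add_lt_add_iff_right,
    Fin.val_fin_lt]

theorem sigmaD_eq_of_okey_lt_iff (σ : Equiv.Perm (Fin n))
    (h : ∀ i j, okey D i < okey D j ↔ σ i < σ j) : sigmaD D = σ := by
  ext i
  have hle : ∀ j, okey D j ≤ okey D i ↔ σ j ≤ σ i := fun j => by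
    simp only [← not_lt, h]
  have : labelOf D i = σ i + 1 := by
    calc labelOf D i = #{k | k ≤ σ i} := card_equiv σ (by simp [hle])
      _ = σ i + 1 := by rw [filter_ge_eq_Iic, Fin.card_Iic]
  have := sigmaD_add_one D i
  omega

noncomputable def betaD : HO n := (sigmaD D, fun i => decide ((D i).1 % 2 = 0))

theorem val_betaD (i : Fin n) : HO.val (betaD D) (i + 1) = classifyVal D i := by
  have := sigmaD_add_one D i
  rw [HO.val_succ, classifyVal, betaD]
  rcases Nat.mod_two_eq_zero_or_one (D i).1 with ha | ha <;>
    simp only [ha, decide_true, decide_false, ↓reduceIte, zero_ne_one, one_ne_zero,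
      Bool.false_eq_true] <;> omega

end Labels

section Diagrams

open HO

variable {n : ℕ}

theorem okey_lt_okey_of_lt {D : Fin n → ℕ × ℕ} (hD : Monotone fun i => toLex (D i)) {i j : Fin n}
    (hij : i < j) (h : (D i).1 = (D j).1 ∨ (D i).2 = (D j).2) : okey D i < okey D j := by
  have := hD hij.le
  simp only [okey, Prod.Lex.toLex_le_toLex, Prod.Lex.toLex_lt_toLex] at this ⊢
  omega

theorem compatible_betaD_fst {D : Fin n → ℕ × ℕ} (hD : Monotone fun i => toLex (D i)) :
    Compatible (betaD D) fun i => (D i).1 where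
  mod_two i := by
    rw [etaStat_succ, betaD]
    split_ifs with h <;> simp only [decide_eq_true_eq] at h <;> omega
  step i j hij := by
    have hlt : i < j := Fin.lt_def.2 (by omega)
    refine ⟨?_, fun h => (sigmaD_lt_sigmaD_iff D).2 (okey_lt_okey_of_lt hD hlt (Or.inl h))⟩
    have := hD hlt.le
    rw [Prod.Lex.toLex_le_toLex] at this
    omega

theorem compatible_inv_betaD_snd {D : Fin n → ℕ × ℕ} (hD : Monotone fun i => toLex (D i))
    (hpar : ∀ i, ((D i).1 + (D i).2) % 2 = 0) :
    Compatible (inv (betaD D)) fun k => (D ((sigmaD D)⁻¹ k)).2 where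
  mod_two k := by
    have := hpar ((sigmaD D)⁻¹ k)
    rw [etaStat_succ, inv_snd_apply, betaD]
    simp only [Equiv.Perm.inv_def] at this ⊢
    split_ifs with h <;> simp only [decide_eq_true_eq] at h <;> omega
  step k l hkl := by
    set i := (sigmaD D)⁻¹ k
    set j := (sigmaD D)⁻¹ l
    have hij : okey D i < okey D j := by
      rw [← sigmaD_lt_sigmaD_iff]
      simp only [i, j, Equiv.Perm.coe_inv, Equiv.apply_symm_apply]
      omega
    refine ⟨?_, fun h => ?_⟩
    · simp only [okey, Prod.Lex.toLex_lt_toLex] at hij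
      omega
    · show i < j
      rcases lt_trichotomy i j with h' | h' | h'
      · exact h'
      · exact absurd (h' ▸ hij) (lt_irrefl _)
      · exact absurd (okey_lt_okey_of_lt hD h' (Or.inr h.symm)) hij.asymm

def diagram (β : HO n) (x y : Fin n → ℕ) : Fin n → ℕ × ℕ := fun i => (x i, y (β.1 i))

theorem Dbeta_eq_diagram (β : HO n) :
    Dbeta β = diagram β (fun i => gstat β (i + 1)) fun k => gstat (inv β) (k + 1) := by
  funext i
  simp [Dbeta, diagram, natAbs_val_succ]

theorem sum_diagram_snd (β : HO n) (x y : Fin n → ℕ) :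
    ∑ i, (diagram β x y i).2 = ∑ k, y k :=
  Equiv.sum_comp β.1 y

variable {β : HO n} {x y : Fin n → ℕ}

theorem monotone_toLex_diagram (hx : Compatible β x) (hy : Compatible (inv β) y) :
    Monotone fun i => toLex (diagram β x y i) :=
  Fin.monotone_of_forall_val_eq_succ fun i j hij => by
    obtain ⟨hle, hlt⟩ := hx.step i j hij
    rw [Prod.Lex.toLex_le_toLex]
    rcases hle.lt_or_eq with h | h
    exacts [Or.inl h, Or.inr ⟨h, hy.monotone (hlt h).le⟩]

theorem diagram_add_mod_two (hx : Compatible β x) (hy : Compatible (inv β) y) (i : Fin n) :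
    ((diagram β x y i).1 + (diagram β x y i).2) % 2 = 0 := by
  have hxi := hx.mod_two i
  have hyi := hy.mod_two (β.1 i)
  rw [etaStat_inv_succ] at hyi
  have := etaStat_le_one β (i + 1)
  simp only [diagram]
  omega

theorem okey_diagram_lt_iff (hx : Compatible β x) (hy : Compatible (inv β) y) {i j : Fin n} :
    okey (diagram β x y) i < okey (diagram β x y) j ↔ β.1 i < β.1 j := by
  have hmono : StrictMono fun k => okey (diagram β x y) (β.1⁻¹ k) :=
    Fin.strictMono_of_forall_val_eq_succ fun k l hkl => by
      obtain ⟨hle, hlt⟩ := hy.step k l hkl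
      simp only [okey, diagram, Prod.Lex.toLex_lt_toLex, Equiv.Perm.coe_inv,
        Equiv.apply_symm_apply]
      rcases hle.lt_or_eq with h | h
      · exact Or.inl h
      · have hkl' : β.1⁻¹ k < β.1⁻¹ l := hlt h
        have := hx.monotone hkl'.le
        simp only [Equiv.Perm.coe_inv] at hkl' this
        omega
  simpa using hmono.lt_iff_lt (a := β.1 i) (b := β.1 j)

theorem betaD_diagram (hx : Compatible β x) (hy : Compatible (inv β) y) :
    betaD (diagram β x y) = β := by
  refine Prod.ext (sigmaD_eq_of_okey_lt_iff _ _ fun i j => okey_diagram_lt_iff hx hy)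
    (funext fun i => ?_)
  have := hx.mod_two i
  rw [etaStat_succ] at this
  simp only [betaD, diagram]
  cases hb : β.2 i <;> simp only [hb] at this <;> simp [this]

theorem diagram_betaD (D : Fin n → ℕ × ℕ) :
    diagram (betaD D) (fun i => (D i).1) (fun k => (D ((sigmaD D)⁻¹ k)).2) = D := by
  funext i
  simp [diagram, betaD]

end Diagrams

section Partitions

open Finset

variable {n : ℕ}

theorem Multiset.countP_replicate {α : Type*} (p : α → Prop) [DecidablePred p] (c : ℕ) (a : α) :
    (Multiset.replicate c a).countP p = if p a then c else 0 := by
  rw [← Multiset.coe_replicate, Multiset.coe_countP, List.countP_replicate]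
  simp

-- The conjugate partition, padded with zeros to `n` parts and listed in increasing order.
noncomputable def conjugateSeq (n : ℕ) (s : Multiset ℕ) (i : Fin n) : ℕ := s.countP (n - i ≤ ·)

theorem monotone_conjugateSeq (s : Multiset ℕ) : Monotone (conjugateSeq n s) := fun i j hij => by
  simp only [conjugateSeq, Multiset.countP_eq_card_filter]
  exact Multiset.card_le_card (Multiset.monotone_filter_right s fun p hp => by
    have := Fin.le_def.1 hij
    omega)

theorem Fin.card_filter_sub_val_le {a : ℕ} (ha : a ≤ n) : #{i : Fin n | n - i ≤ a} = a := by
  have h := card_filter_add_card_filter_not (s := univ) (p := fun i : Fin n => (i : ℕ) < n - a)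
  rw [Fin.card_filter_val_lt, card_univ, Fintype.card_fin] at h
  rw [filter_congr (q := fun i : Fin n => n - i ≤ a) (by intros; omega)] at h
  omega

theorem sum_conjugateSeq {s : Multiset ℕ} (hs : ∀ p ∈ s, p ≤ n) :
    ∑ i, conjugateSeq n s i = s.sum := by
  induction s using Multiset.induction_on with
  | empty => simp [conjugateSeq]
  | cons a s ih =>
    simp only [conjugateSeq, Multiset.countP_cons, sum_add_distrib, sum_boole, Nat.cast_id]
    rw [Fin.card_filter_sub_val_le (hs a (Multiset.mem_cons_self a s)), Multiset.sum_cons,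
      add_comm a]
    exact congrArg (· + a) (ih fun p hp => hs p (Multiset.mem_cons_of_mem hp))

theorem Multiset.countP_le_eq_count_add_countP (s : Multiset ℕ) (p : ℕ) :
    s.countP (p ≤ ·) = s.count p + s.countP (p + 1 ≤ ·) := by
  induction s using Multiset.induction_on with
  | empty => simp
  | cons a s ih =>
    simp only [Multiset.countP_cons, Multiset.count_cons, ih]
    split_ifs <;> omega

theorem conjugateSeq_injective {s t : Multiset ℕ} (hs : ∀ p ∈ s, 1 ≤ p ∧ p ≤ n)
    (ht : ∀ p ∈ t, 1 ≤ p ∧ p ≤ n) (h : conjugateSeq n s = conjugateSeq n t) : s = t := by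
  have hge : ∀ p, 1 ≤ p → s.countP (p ≤ ·) = t.countP (p ≤ ·) := fun p hp => by
    by_cases hpn : p ≤ n
    · simpa [conjugateSeq, Nat.sub_sub_self hpn] using congrFun h ⟨n - p, by omega⟩
    · rw [Multiset.countP_eq_zero.2 fun q hq => by have := hs q hq; omega,
        Multiset.countP_eq_zero.2 fun q hq => by have := ht q hq; omega]
  ext p
  by_cases hp : 1 ≤ p
  · have := Multiset.countP_le_eq_count_add_countP s p
    have := Multiset.countP_le_eq_count_add_countP t p
    have := hge p hp
    have := hge (p + 1) (by omega)
    omega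
  · rw [Multiset.count_eq_zero.2 fun hm => by have := hs p hm; omega,
      Multiset.count_eq_zero.2 fun hm => by have := ht p hm; omega]

noncomputable def increment (m : Fin n → ℕ) (j : Fin n) : ℕ :=
  m j - if h : (j : ℕ) = 0 then 0 else m ⟨j - 1, by omega⟩

theorem sum_increment_of_le {m : Fin n → ℕ} (hm : Monotone m) (i : Fin n) :
    ∑ j, (if j ≤ i then increment m j else 0) = m i := by
  obtain ⟨k, rfl⟩ : ∃ k, n = k + 1 := ⟨n - 1, by have := i.isLt; omega⟩
  induction i using Fin.induction with
  | zero => simp [increment]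
  | succ i ih =>
    have hsplit : ∀ j : Fin (k + 1), (if j ≤ i.succ then increment m j else 0) =
        (if j ≤ i.castSucc then increment m j else 0) + if j = i.succ then increment m j else 0 :=
      fun j => by
        simp only [Fin.le_def, Fin.ext_iff, Fin.val_castSucc, Fin.val_succ]
        split_ifs <;> omega
    rw [sum_congr rfl fun j _ => hsplit j, sum_add_distrib, ih, sum_ite_eq']
    have hc : (⟨i, by omega⟩ : Fin (k + 1)) = i.castSucc := rfl
    have := hm (Fin.castSucc_le_succ i)
    simp only [mem_univ, if_true, increment, Fin.val_succ, Nat.add_one_ne_zero, dif_neg,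
      not_false_eq_true, Nat.add_sub_cancel, hc]
    omega

noncomputable def partitionOfConjugateSeq (m : Fin n → ℕ) : Multiset ℕ :=
  ∑ j : Fin n, Multiset.replicate (increment m j) (n - j)

theorem mem_partitionOfConjugateSeq {m : Fin n → ℕ} {p : ℕ} (hp : p ∈ partitionOfConjugateSeq m) :
    1 ≤ p ∧ p ≤ n := by
  obtain ⟨j, -, hj⟩ := Multiset.mem_sum.1 hp
  have := Multiset.eq_of_mem_replicate hj
  omega

theorem conjugateSeq_partitionOfConjugateSeq {m : Fin n → ℕ} (hm : Monotone m) :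
    conjugateSeq n (partitionOfConjugateSeq m) = m := by
  funext i
  rw [conjugateSeq, partitionOfConjugateSeq, ← Multiset.coe_countPAddMonoidHom, map_sum]
  simp only [Multiset.coe_countPAddMonoidHom, Multiset.countP_replicate]
  rw [← sum_increment_of_le hm i]
  refine sum_congr rfl fun j _ => ?_
  split_ifs <;> first | rfl | omega

noncomputable def partitionEquiv (n : ℕ) : PartLE n ≃ {m : Fin n → ℕ // Monotone m} where
  toFun s := ⟨conjugateSeq n s.1, monotone_conjugateSeq s.1⟩
  invFun m := ⟨partitionOfConjugateSeq m.1, fun _ => mem_partitionOfConjugateSeq⟩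
  left_inv s := Subtype.ext <| conjugateSeq_injective (fun _ => mem_partitionOfConjugateSeq) s.2
    (conjugateSeq_partitionOfConjugateSeq (monotone_conjugateSeq s.1))
  right_inv m := Subtype.ext (conjugateSeq_partitionOfConjugateSeq m.2)

theorem sum_partitionEquiv (s : PartLE n) : ∑ i, (partitionEquiv n s).1 i = s.1.sum :=
  sum_conjugateSeq fun p hp => (s.2 p hp).2

end Partitions

section Bijection

open HO

variable {n : ℕ}

def CompatibleData (n : ℕ) : Type :=
  {t : HO n × (Fin n → ℕ) × (Fin n → ℕ) // Compatible t.1 t.2.1 ∧ Compatible (inv t.1) t.2.2}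

noncomputable def diagramEquiv (n : ℕ) : CompatibleData n ≃ EDiag n where
  toFun t := ⟨diagram t.1.1 t.1.2.1 t.1.2.2, monotone_toLex_diagram t.2.1 t.2.2,
    diagram_add_mod_two t.2.1 t.2.2⟩
  invFun D := ⟨(betaD D.1, fun i => (D.1 i).1, fun k => (D.1 ((sigmaD D.1)⁻¹ k)).2),
    compatible_betaD_fst D.2.1, compatible_inv_betaD_snd D.2.1 D.2.2⟩
  left_inv := by
    rintro ⟨⟨β, x, y⟩, hx, hy⟩
    have hβ := betaD_diagram hx hy
    have hσ : sigmaD (diagram β x y) = β.1 := congrArg Prod.fst hβ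
    refine Subtype.ext (Prod.ext hβ (Prod.ext rfl (funext fun k => ?_)))
    simp [diagram, hσ]
  right_inv D := Subtype.ext (diagram_betaD D.1)

noncomputable def compatibleDataEquiv (n : ℕ) :
    CompatibleData n ≃ HO n × {m : Fin n → ℕ // Monotone m} × {m : Fin n → ℕ // Monotone m} :=
  (Equiv.subtypeProdEquivSigmaSubtype fun β (xy : (Fin n → ℕ) × (Fin n → ℕ)) =>
      Compatible β xy.1 ∧ Compatible (inv β) xy.2).trans <|
    (Equiv.sigmaCongrRight fun β => Equiv.subtypeProdEquivProd.trans
      ((compatibleEquiv β).prodCongr (compatibleEquiv (inv β)))).trans (Equiv.sigmaEquivProd _ _)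

end Bijection

/-- there is a bijection `D ↔ (D_β, λ, μ)` between `n`-cell `e`-diagrams
and triples of a compact `e`-diagram `D_β` (equivalently, of `β ∈ B_n`) and two
partitions `λ, μ` with parts at most `n`; the classifying signed permutation of the
diagram associated to `(β, λ, μ)` is `β`, and the weights satisfy
`|D| = |D_β| + 2(|λ|, |μ|)`. -/
theorem e_diagram_bijection (n : ℕ) :
    ∃ Φ : HO n × PartLE n × PartLE n ≃ EDiag n,
      ∀ (β : HO n) (lam mu : PartLE n),
        (∀ i : Fin n,
          classifyVal (Φ (β, lam, mu)).1 i = HO.val β ((i : ℕ) + 1)) ∧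
        (∑ i : Fin n, ((Φ (β, lam, mu)).1 i).1)
          = (∑ i : Fin n, (Dbeta β i).1) + 2 * lam.1.sum ∧
        (∑ i : Fin n, ((Φ (β, lam, mu)).1 i).2)
          = (∑ i : Fin n, (Dbeta β i).2) + 2 * mu.1.sum := by
  let Φ := ((Equiv.refl (HO n)).prodCongr ((partitionEquiv n).prodCongr (partitionEquiv n))).trans
    ((compatibleDataEquiv n).symm.trans (diagramEquiv n))
  refine ⟨Φ, fun β lam mu => ?_⟩
  have hx := (HO.compatible_gstat β).add_two_mul (partitionEquiv n lam).2
  have hy := (HO.compatible_gstat (HO.inv β)).add_two_mul (partitionEquiv n mu).2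
  have hΦ : (Φ (β, lam, mu)).1 =
      diagram β (fun i => HO.gstat β (i + 1) + 2 * (partitionEquiv n lam).1 i)
        (fun k => HO.gstat (HO.inv β) (k + 1) + 2 * (partitionEquiv n mu).1 k) := rfl
  rw [hΦ, Dbeta_eq_diagram, sum_diagram_snd, sum_diagram_snd]
  refine ⟨fun i => by rw [← val_betaD, betaD_diagram hx hy], ?_, ?_⟩
  · simp only [diagram, Finset.sum_add_distrib, ← Finset.mul_sum, sum_partitionEquiv]
  · simp only [Finset.sum_add_distrib, ← Finset.mul_sum, sum_partitionEquiv]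
end

section
/- For all n, sum over beta in B_n of q^{|g(beta)|} t^{|g^(beta)|} equals sum over beta in B_n of q^{fmaj(beta)} t^{n^2 - fmaj(beta^{-1})}, where |g(beta)| = sum_i g_i(beta) and |g^(beta)| = sum_i (2 mu_{sigma(i)}(beta) + epsilon_i(beta)) with mu_i(beta) = #{k in Ris(beta^{-1}) : k < i} and Ris the rise set. -/
open scoped Classical

/-!
The involution `revNeg`, `β ↦ (i ↦ -sgn β(n+1-i) · (n + 1 - |β(n+1-i)|))`, reverses `≺` on
values and reverses positions, so `Des (revNeg β) = n - Des β`, and it has `n - neg β` negative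
entries. Since `δ_i` counts the descents below `i`, this gives
`∑ g_i(β) = 2 ∑_{j ∈ Des β} (n - j) + (n - neg β) = fmaj (revNeg β)`. Likewise `σ` is a
bijection, so `∑ 2 μ_{σ(i)}(β) = 2 ∑_{k ∈ Ris β⁻¹} (n - k)`; as `Ris` and `Des` partition
`[n - 1]` and `2 ∑_{k=1}^{n-1} (n - k) = n² - n`, this gives `∑ ĝ_i(β) = n² - fmaj (revNeg β⁻¹)`.
Finally `revNeg` commutes with inversion, so reindexing the sum by `revNeg` proves the identity.
-/

open Finset

theorem sum_Icc_one_eq_sum_fin {M : Type*} [AddCommMonoid M] (n : ℕ) (f : ℕ → M) :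
    ∑ i ∈ Icc 1 n, f i = ∑ k : Fin n, f (k + 1) := by
  rw [Fin.sum_univ_eq_sum_range (fun k => f (k + 1)), range_eq_Ico, sum_Ico_add' f 0 n 1,
    zero_add, Ico_add_one_right_eq_Icc]

theorem sum_Icc_card_filter_lt (n : ℕ) (S : Finset ℕ) :
    ∑ i ∈ Icc 1 n, #{j ∈ S | j < i} = ∑ k ∈ S, (n - k) := by
  simp only [card_filter]
  rw [sum_comm]
  refine sum_congr rfl fun k _ => ?_
  have hIcc : {i ∈ Icc 1 n | k < i} = Icc (k + 1) n := by
    ext i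
    simp only [mem_filter, mem_Icc]
    omega
  rw [sum_boole, hIcc, Nat.card_Icc, Nat.cast_id]
  omega

theorem two_mul_sum_Icc_sub_add (n : ℕ) : 2 * ∑ k ∈ Icc 1 (n - 1), (n - k) + n = n ^ 2 := by
  have hextend : ∑ k ∈ Icc 1 (n - 1), (n - k) = ∑ k ∈ Icc 1 n, (n - k) :=
    sum_subset (Icc_subset_Icc_right (Nat.sub_le n 1)) fun k hk hk' => by
      simp only [mem_Icc] at hk hk'
      omega
  have hreflect : ∑ k ∈ Icc 1 n, (n - k) = ∑ k ∈ range n, k := by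
    rw [sum_Icc_one_eq_sum_fin, ← Fin.sum_univ_eq_sum_range, ← Equiv.sum_comp Fin.revPerm]
    refine sum_congr rfl fun k _ => ?_
    rw [Fin.revPerm_apply, Fin.val_rev]
    have := k.isLt
    omega
  rw [hextend, hreflect, mul_comm, sum_range_id_mul_two]
  cases n <;> simp
  ring

namespace HO

variable {n : ℕ}

theorem not_bprec_iff {x y : ℤ} (h : x ≠ y) : ¬ bprec y x ↔ bprec x y := by
  unfold bprec
  omega

def revNegInt (n : ℕ) (x : ℤ) : ℤ := if x < 0 then n + 1 + x else x - (n + 1)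

theorem bprec_revNegInt {x y : ℤ} (hx : x.natAbs ≤ n) (hy : y.natAbs ≤ n) :
    bprec (revNegInt n x) (revNegInt n y) ↔ bprec y x := by
  unfold bprec revNegInt
  split_ifs <;> omega

theorem exists_fin_add_one_eq {i : ℕ} (hi : i ∈ Icc 1 n) : ∃ k : Fin n, (k : ℕ) + 1 = i := by
  rw [mem_Icc] at hi
  exact ⟨⟨i - 1, by omega⟩, by rw [Fin.val_mk]; omega⟩

theorem val_add_one (β : HO n) (k : Fin n) :
    val β (k + 1) = if β.2 k then -((β.1 k : ℤ) + 1) else (β.1 k : ℤ) + 1 := by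
  simp [val]

theorem val_add_one_neg_iff (β : HO n) (k : Fin n) : val β (k + 1) < 0 ↔ β.2 k := by
  rw [val_add_one]
  split <;> simp_all <;> omega

theorem natAbs_val_add_one (β : HO n) (k : Fin n) : (val β (k + 1)).natAbs = β.1 k + 1 := by
  rw [val_add_one]
  split <;> omega

theorem natAbs_val_le (β : HO n) {i : ℕ} (hi : i ∈ Icc 1 n) : (val β i).natAbs ≤ n := by
  obtain ⟨k, rfl⟩ := exists_fin_add_one_eq hi
  rw [natAbs_val_add_one]
  exact (β.1 k).isLt

theorem val_ne_zero (β : HO n) {i : ℕ} (hi : i ∈ Icc 1 n) : val β i ≠ 0 := by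
  obtain ⟨k, rfl⟩ := exists_fin_add_one_eq hi
  rw [← Int.natAbs_ne_zero, natAbs_val_add_one]
  omega

theorem val_injOn (β : HO n) : Set.InjOn (val β) (Icc 1 n) := by
  intro i hi j hj hij
  obtain ⟨k, rfl⟩ := exists_fin_add_one_eq hi
  obtain ⟨l, rfl⟩ := exists_fin_add_one_eq hj
  have hkl := congrArg Int.natAbs hij
  simp only [natAbs_val_add_one, Nat.add_right_cancel_iff, Fin.val_inj,
    EmbeddingLike.apply_eq_iff_eq] at hkl
  rw [hkl]

theorem sum_comp_natAbs_val {M : Type*} [AddCommMonoid M] (β : HO n) (f : ℕ → M) :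
    ∑ i ∈ Icc 1 n, f (val β i).natAbs = ∑ i ∈ Icc 1 n, f i := by
  simp only [sum_Icc_one_eq_sum_fin, natAbs_val_add_one]
  exact Equiv.sum_comp β.1 fun k => f (k + 1)

theorem Ris_eq_sdiff_Des (β : HO n) : Ris β = Icc 1 (n - 1) \ Des β := by
  ext j
  simp only [Ris, Des, mem_sdiff, mem_filter]
  refine and_congr_right fun hj => ?_
  rw [and_iff_right hj, not_bprec_iff]
  rw [mem_Icc] at hj
  exact (val_injOn β).ne (mem_Icc.mpr ⟨hj.1, by omega⟩) (mem_Icc.mpr ⟨by omega, by omega⟩)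
    (by omega)

theorem sum_Ris_add_sum_Des (β : HO n) (f : ℕ → ℕ) :
    ∑ k ∈ Ris β, f k + ∑ k ∈ Des β, f k = ∑ k ∈ Icc 1 (n - 1), f k := by
  rw [Ris_eq_sdiff_Des]
  exact sum_sdiff (filter_subset _ _)

theorem sum_epsStat (β : HO n) : ∑ i ∈ Icc 1 n, epsStat β i = neg β := by
  rw [neg, card_filter]
  rfl

theorem neg_eq_sum_fin (β : HO n) : neg β = ∑ k : Fin n, if β.2 k then 1 else 0 := by
  simp only [← sum_epsStat, sum_Icc_one_eq_sum_fin, epsStat, val_add_one_neg_iff]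

theorem neg_le (β : HO n) : neg β ≤ n :=
  (card_filter_le _ _).trans (by simp)

theorem sum_etaStat (β : HO n) : ∑ i ∈ Icc 1 n, etaStat β i = n - neg β := by
  have hsum : ∑ i ∈ Icc 1 n, (etaStat β i + epsStat β i) = n := by
    rw [sum_congr rfl fun i hi => ?_, sum_const, Nat.card_Icc, smul_eq_mul, mul_one,
      Nat.add_sub_cancel]
    have := val_ne_zero β hi
    unfold etaStat epsStat
    split_ifs <;> omega
  rw [sum_add_distrib, sum_epsStat] at hsum
  omega

theorem neg_inv (β : HO n) : neg (inv β) = neg β := by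
  rw [neg_eq_sum_fin, neg_eq_sum_fin]
  exact Equiv.sum_comp β.1⁻¹ fun k => if β.2 k then 1 else 0

def revNeg (β : HO n) : HO n := (Fin.revPerm * β.1 * Fin.revPerm, fun k => !β.2 k.rev)

theorem revNeg_involutive : Function.Involutive (revNeg (n := n)) := by
  intro β
  ext k
  · simp [revNeg]
  · simp [revNeg]

theorem inv_revNeg (β : HO n) : inv (revNeg β) = revNeg (inv β) := by
  ext k
  · simp [inv, revNeg, mul_assoc]
  · simp [inv, revNeg, mul_assoc]

theorem val_revNeg (β : HO n) {i : ℕ} (hi : i ∈ Icc 1 n) :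
    val (revNeg β) i = revNegInt n (val β (n + 1 - i)) := by
  obtain ⟨k, rfl⟩ := exists_fin_add_one_eq hi
  have hrev : n + 1 - (k + 1) = (k.rev : ℕ) + 1 := by
    rw [Fin.val_rev]
    omega
  rw [hrev, val_add_one, val_add_one]
  have hrev' : ((β.1 k.rev).rev : ℕ) + β.1 k.rev + 1 = n := by
    rw [Fin.val_rev]
    have := (β.1 k.rev).isLt
    omega
  simp only [revNeg, Equiv.Perm.mul_apply, Fin.revPerm_apply, revNegInt]
  cases β.2 k.rev <;>
    simp only [Bool.not_false, Bool.not_true, Bool.false_eq_true, ↓reduceIte] <;>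
    split_ifs <;> omega

theorem mem_Des_revNeg (β : HO n) (j : ℕ) : j ∈ Des (revNeg β) ↔ n - j ∈ Des β := by
  simp only [Des, mem_filter, mem_Icc]
  by_cases hj : 1 ≤ j ∧ j ≤ n - 1
  · have mem_Icc_of {m : ℕ} (h1 : 1 ≤ m) (h2 : m ≤ n) : m ∈ Icc 1 n := mem_Icc.mpr ⟨h1, h2⟩
    rw [val_revNeg β (mem_Icc_of hj.1 (by omega)),
      val_revNeg β (mem_Icc_of (by omega) (by omega)),
      show n + 1 - (j + 1) = n - j by omega, show n + 1 - j = n - j + 1 by omega,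
      bprec_revNegInt (natAbs_val_le β (mem_Icc_of (by omega) (by omega)))
        (natAbs_val_le β (mem_Icc_of (by omega) (by omega))),
      and_iff_right hj, and_iff_right (show 1 ≤ n - j ∧ n - j ≤ n - 1 by omega)]
  · constructor <;> rintro ⟨h, -⟩ <;> omega

theorem le_of_mem_Des {β : HO n} {j : ℕ} (hj : j ∈ Des β) : j ≤ n :=
  (mem_Icc.mp (filter_subset _ _ hj)).2.trans (Nat.sub_le n 1)

theorem maj_revNeg (β : HO n) : maj (revNeg β) = ∑ j ∈ Des β, (n - j) :=
  sum_nbij' (n - ·) (n - ·) (fun j hj => (mem_Des_revNeg β j).mp hj)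
    (fun j hj => by rwa [mem_Des_revNeg, Nat.sub_sub_self (le_of_mem_Des hj)])
    (fun j hj => Nat.sub_sub_self (le_of_mem_Des hj))
    (fun j hj => Nat.sub_sub_self (le_of_mem_Des hj))
    (fun j hj => (Nat.sub_sub_self (le_of_mem_Des hj)).symm)

theorem neg_revNeg (β : HO n) : neg (revNeg β) = n - neg β := by
  have hsum : neg (revNeg β) + neg β = n := by
    have hBool (b : Bool) :
        ((if (!b) = true then 1 else 0) + if b = true then 1 else 0 : ℕ) = 1 := by
      cases b <;> rfl
    rw [neg_eq_sum_fin, neg_eq_sum_fin,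
      ← Equiv.sum_comp Fin.revPerm fun k => if β.2 k then 1 else 0, ← sum_add_distrib]
    exact (sum_congr rfl fun k _ => hBool (β.2 k.rev)).trans (by simp)
  omega

theorem fmaj_revNeg (β : HO n) : fmaj (revNeg β) = 2 * ∑ j ∈ Des β, (n - j) + (n - neg β) := by
  rw [fmaj, maj_revNeg, neg_revNeg]

theorem sum_gstat (β : HO n) : ∑ i ∈ Icc 1 n, gstat β i = fmaj (revNeg β) := by
  simp only [gstat, deltaStat, sum_add_distrib, ← mul_sum, sum_Icc_card_filter_lt, sum_etaStat,
    fmaj_revNeg]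

theorem sum_ghat (β : HO n) : ∑ i ∈ Icc 1 n, ghat β i = n ^ 2 - fmaj (revNeg (inv β)) := by
  rw [fmaj_revNeg, neg_inv]
  simp only [ghat, sum_add_distrib, ← mul_sum, sum_epsStat]
  rw [sum_comp_natAbs_val β (muStat β)]
  simp only [muStat, sum_Icc_card_filter_lt]
  have hsplit := sum_Ris_add_sum_Des (inv β) (n - ·)
  have hgauss := two_mul_sum_Icc_sub_add n
  have hneg := neg_le β
  omega

end HO

/-- `∑_{β ∈ B_n} q^{|g(β)|} t^{|ĝ(β)|} = ∑_{β ∈ B_n} q^{fmaj β} t^{n² - fmaj(β⁻¹)}`,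
as polynomials in `q = X 0` and `t = X 1`. -/
theorem gstat_ghat_generating_function (n : ℕ) :
    ∑ β : HO n,
        (MvPolynomial.X 0 : MvPolynomial (Fin 2) ℚ) ^ (∑ i ∈ Finset.Icc 1 n, HO.gstat β i) *
          (MvPolynomial.X 1) ^ (∑ i ∈ Finset.Icc 1 n, HO.ghat β i)
      = ∑ β : HO n,
        (MvPolynomial.X 0 : MvPolynomial (Fin 2) ℚ) ^ HO.fmaj β *
          (MvPolynomial.X 1) ^ (n ^ 2 - HO.fmaj (HO.inv β)) := by
  refine Fintype.sum_equiv (HO.revNeg_involutive.toPerm _) _ _ fun β => ?_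
  rw [Function.Involutive.coe_toPerm, HO.sum_gstat, HO.sum_ghat, HO.inv_revNeg]
end
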